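/- arXiv:1904.09224 — 9 statements merged into one kernel-verified Lean document; each statement's English description precedes it below -/
import Mathlib

section
/- Let 0 ≤ p < q be integers. Then, as ℚ-linear endomorphisms of B, one has e_p ∘ e_q − e_q ∘ e_p = 2 · ∑_{a=p}^{q−1} f_{p+q−a} ∘ e_a. -/
/-!
`B = ℚ[w_1, w_2, …]` realized as `MvPolynomial ℕ ℚ`, where the `i`-th variable
`X i` is `w_{i+1}` (so every variable is some `w_n` with `n ≥ 1`).
`f n` is multiplication by `w n`, and `e p` is the unique ℚ-linear derivation
with the prescribed values on the variables.
-/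

open MvPolynomial Finset

noncomputable section

abbrev B : Type := MvPolynomial ℕ ℚ

/-- The variable `w_n` of `B` (meaningful for `n ≥ 1`). -/
def w (n : ℕ) : B := MvPolynomial.X (n - 1)

/-- The prescribed value of the derivation `e_p` on the variable `w_m`:
`e_p(w_m) = ∑_{k=p+1}^{m-1} w_k w_{p+m-k}` if `p < m`, and
`e_p(w_m) = -∑_{k=m}^{p} w_k w_{p+m-k}` if `p ≥ m`. -/
def eVal (p m : ℕ) : B :=
  if p < m then ∑ k ∈ Icc (p + 1) (m - 1), w k * w (p + m - k)
  else - ∑ k ∈ Icc m p, w k * w (p + m - k)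

/-- The derivation `e_p`, as a ℚ-linear endomorphism of `B`.
(The `i`-th variable of `B` is `w_{i+1}`.) -/
def e (p : ℕ) : B →ₗ[ℚ] B :=
  (MvPolynomial.mkDerivation ℚ (fun i : ℕ => eVal p (i + 1))).toLinearMap

/-- Multiplication by `w_n`, as a ℚ-linear endomorphism of `B` (for `n ≥ 1`). -/
def f (n : ℕ) : B →ₗ[ℚ] B := LinearMap.mulLeft ℚ (w n)

/-!
Both sides are derivations of `B`, so it suffices to compare them on the generators `w_m`.
The two cases defining `e_p(w_m)` merge into `∑_{k+l=p+m} (1 - [k ≤ p] - [l ≤ p]) w_k w_l`,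
and then both sides applied to `w_m` are cubic sums `∑_{k+a+b=p+q+m} c(k,a,b) w_k w_a w_b`.
Such a sum depends on `c` only up to permuting its arguments, and the two coefficient
functions differ by `h(k,a) + h(k,b) - h(a,k) - h(b,k)` with
`h(x,y) = [p < y ≤ q] (1 - [x ≤ p] - [x ≥ m])`, which therefore contributes nothing.
-/

lemma Derivation.sum_apply {ι R A M : Type*} [CommSemiring R] [CommSemiring A] [Algebra R A]
    [AddCommMonoid M] [Module A M] [Module R M] (s : Finset ι) (D : ι → Derivation R A M) (x : A) :
    (∑ i ∈ s, D i) x = ∑ i ∈ s, D i x := by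
  rw [← Derivation.coeFnAddMonoidHom_apply, map_sum, Finset.sum_apply]
  rfl

namespace KroneckerCoHA

def wInt (n : ℤ) : B := if 0 < n then w n.toNat else 0

lemma wInt_natCast {n : ℕ} (hn : n ≠ 0) : wInt n = w n := by
  simp [wInt, Nat.pos_of_ne_zero hn]

def step (x : ℤ) : ℤ := if 0 < x then 1 else 0

def pairCoeff (p x y : ℤ) : ℤ := step (x - p) + step (y - p) - 1

lemma pairCoeff_comm (p x y : ℤ) : pairCoeff p x y = pairCoeff p y x := by
  rw [pairCoeff, pairCoeff, add_comm (step _)]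

/-- `∑_{k+l=S} c k l • w_k w_l`, only positive indices contributing. -/
def pairSum (S : ℤ) (c : ℤ → ℤ → ℤ) : B :=
  ∑ k ∈ Icc 1 (S - 1), c k (S - k) • (wInt k * wInt (S - k))

lemma sum_Icc_reflect {M : Type*} [AddCommMonoid M] (S : ℤ) (F : ℤ → M) :
    ∑ k ∈ Icc 1 (S - 1), F (S - k) = ∑ k ∈ Icc 1 (S - 1), F k :=
  sum_nbij' (S - ·) (S - ·) (fun k => by simp only [mem_Icc]; omega)
    (fun k => by simp only [mem_Icc]; omega) (fun k _ => by simp) (fun k _ => by simp)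
    (fun k _ => by simp)

lemma pairSum_comm (S : ℤ) (c : ℤ → ℤ → ℤ) : pairSum S c = pairSum S (fun x y => c y x) := by
  rw [pairSum, ← sum_Icc_reflect]
  simp only [sub_sub_cancel, mul_comm]
  rfl

lemma pairSum_add (S : ℤ) (c d : ℤ → ℤ → ℤ) :
    pairSum S (c + d) = pairSum S c + pairSum S d := by
  simp only [pairSum, Pi.add_apply, add_smul, sum_add_distrib]

lemma pairSum_const_mul (S t : ℤ) (c : ℤ → ℤ → ℤ) :
    pairSum S (fun x y => t * c x y) = t • pairSum S c := by
  simp only [pairSum, smul_sum, mul_smul]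

lemma map_pairSum {R : Type*} [CommSemiring R] [Algebra R B] (D : Derivation R B B) {S : ℤ}
    {c : ℤ → ℤ → ℤ} (hc : ∀ x y, c x y = c y x) :
    D (pairSum S c) = 2 • ∑ k ∈ Icc 1 (S - 1), c k (S - k) • (wInt k * D (wInt (S - k))) := by
  have reflect : ∑ k ∈ Icc 1 (S - 1), c k (S - k) • (wInt (S - k) * D (wInt k)) =
      ∑ k ∈ Icc 1 (S - 1), c k (S - k) • (wInt k * D (wInt (S - k))) := by
    rw [← sum_Icc_reflect]
    simp only [sub_sub_cancel, hc (S - _)]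
  simp only [pairSum, map_sum, map_zsmul, Derivation.leibniz, smul_eq_mul, smul_add,
    sum_add_distrib, reflect, two_smul]

lemma sum_Icc_w_mul_w {a b n : ℕ} (ha : a ≠ 0) (hb : b < n) :
    ∑ k ∈ Icc a b, w k * w (n - k) = ∑ k ∈ Icc (a : ℤ) b, wInt k * wInt (n - k) := by
  refine sum_nbij' (↑) Int.toNat ?_ ?_ ?_ ?_ fun k hk => ?_
  any_goals intro k hk; simp only [mem_Icc] at hk ⊢; omega
  simp only [mem_Icc] at hk
  rw [wInt_natCast (by omega), ← Nat.cast_sub (by omega), wInt_natCast (by omega)]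

lemma eVal_eq_pairSum (p : ℕ) {m : ℕ} (hm : m ≠ 0) :
    eVal p m = pairSum (p + m) (pairCoeff p) := by
  have hsplit : ∀ k ∈ Icc 1 ((p + m : ℤ) - 1),
      pairCoeff p k (p + m - k) • (wInt k * wInt (p + m - k)) =
      (if k ∈ Icc ((p : ℤ) + 1) (m - 1) then wInt k * wInt (p + m - k) else 0) -
        (if k ∈ Icc (m : ℤ) p then wInt k * wInt (p + m - k) else 0) := by
    intro k hk
    simp only [mem_Icc] at hk ⊢
    unfold pairCoeff step
    split_ifs <;> first | omega | simp
  have hI₁ : Icc 1 ((p + m : ℤ) - 1) ∩ Icc ((p : ℤ) + 1) (m - 1) = Icc ((p : ℤ) + 1) (m - 1) :=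
    inter_eq_right.2 fun k => by simp only [mem_Icc]; omega
  have hI₂ : Icc 1 ((p + m : ℤ) - 1) ∩ Icc (m : ℤ) p = Icc (m : ℤ) p :=
    inter_eq_right.2 fun k => by simp only [mem_Icc]; omega
  have heVal : eVal p m = ∑ k ∈ Icc (p + 1) (m - 1), w k * w (p + m - k) -
      ∑ k ∈ Icc m p, w k * w (p + m - k) := by
    unfold eVal
    split_ifs
    · rw [Icc_eq_empty (show ¬m ≤ p by omega), sum_empty, sub_zero]
    · rw [Icc_eq_empty (show ¬p + 1 ≤ m - 1 by omega), sum_empty, zero_sub]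
  rw [heVal, pairSum, sum_congr rfl hsplit, sum_sub_distrib, sum_ite_mem, sum_ite_mem, hI₁, hI₂,
    sum_Icc_w_mul_w (by omega) (by omega), sum_Icc_w_mul_w hm (by omega)]
  push_cast [Nat.one_le_iff_ne_zero.2 hm]
  rfl

def eDer (p : ℕ) : Derivation ℚ B B := mkDerivation ℚ (fun i : ℕ => eVal p (i + 1))

lemma e_apply (p : ℕ) (x : B) : e p x = eDer p x := rfl

lemma eDer_X (p i : ℕ) : eDer p (X i) = eVal p (i + 1) := mkDerivation_X _ _ _

lemma eDer_wInt (p : ℕ) {l : ℤ} (hl : 0 < l) :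
    eDer p (wInt l) = pairSum (p + l) (pairCoeff p) := by
  rw [wInt, if_pos hl, w, eDer_X, Nat.sub_add_cancel (by omega), eVal_eq_pairSum p (by omega),
    Int.toNat_of_nonneg hl.le]

/-- `∑_{k+a+b=S} c k a b • w_k w_a w_b`, only positive indices contributing. -/
def tripleSum (S : ℤ) (c : ℤ → ℤ → ℤ → ℤ) : B :=
  ∑ k ∈ Icc 1 S, wInt k * pairSum (S - k) (c k)

lemma tripleSum_add (S : ℤ) (c d : ℤ → ℤ → ℤ → ℤ) :
    tripleSum S (c + d) = tripleSum S c + tripleSum S d := by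
  simp only [tripleSum, Pi.add_apply, pairSum_add, mul_add, sum_add_distrib]

lemma tripleSum_congr {S : ℤ} {c d : ℤ → ℤ → ℤ → ℤ}
    (h : ∀ x y, c x y (S - x - y) = d x y (S - x - y)) :
    tripleSum S c = tripleSum S d := by
  simp only [tripleSum, pairSum, h]

lemma tripleSum_swap (S : ℤ) (c : ℤ → ℤ → ℤ → ℤ) :
    tripleSum S c = tripleSum S (fun x y z => c y x z) := by
  simp only [tripleSum, pairSum, mul_sum, mul_smul_comm]
  rw [sum_comm' (t' := Icc 1 S) (s' := fun y => Icc 1 (S - y - 1))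
    (by intro x y; simp only [mem_Icc]; omega)]
  refine sum_congr rfl fun y _ => sum_congr rfl fun x _ => ?_
  rw [sub_right_comm S x y, mul_left_comm]

lemma tripleSum_flip (S : ℤ) (c : ℤ → ℤ → ℤ → ℤ) :
    tripleSum S c = tripleSum S (fun x y z => c x z y) := by
  simp only [tripleSum, pairSum_comm (S - _) (c _)]

lemma tripleSum_comm_two (S : ℤ) (h : ℤ → ℤ → ℤ) :
    tripleSum S (fun x y z => h x y + h x z) = tripleSum S (fun x y z => h y x + h z x) := by
  have hc := tripleSum_add S (fun x y _ => h x y) (fun x _ z => h x z)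
  have hd := tripleSum_add S (fun x y _ => h y x) (fun x _ z => h z x)
  simp only [Pi.add_def] at hc hd
  rw [hc, hd, tripleSum_flip S (fun x _ z => h x z), tripleSum_flip S (fun x _ z => h z x),
    tripleSum_swap S (fun x y _ => h x y)]

lemma tripleSum_mul_eq_sum_Icc {S lo hi : ℤ} (t : ℤ → ℤ) (c : ℤ → ℤ → ℤ → ℤ) (hlo : 1 ≤ lo)
    (hhi : hi ≤ S) (ht : ∀ k ∈ Icc 1 S, k ∉ Icc lo hi → t k = 0) :
    tripleSum S (fun k a b => t k * c k a b) =
      ∑ k ∈ Icc lo hi, t k • (wInt k * pairSum (S - k) (c k)) := by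
  simp only [tripleSum, pairSum_const_mul, mul_smul_comm]
  exact (sum_subset (fun k => by simp only [mem_Icc]; omega)
    fun k hk hk' => by rw [ht k hk hk', zero_smul]).symm

lemma eDer_eVal (p q : ℕ) {m : ℕ} (hm : m ≠ 0) :
    eDer p (eVal q m) =
      2 • tripleSum (p + q + m) (fun k a b => pairCoeff q k (q + m - k) * pairCoeff p a b) := by
  rw [eVal_eq_pairSum q hm, map_pairSum _ (pairCoeff_comm q),
    tripleSum_mul_eq_sum_Icc (lo := 1) (hi := q + m - 1) _ _ le_rfl (by omega) ?vanish]
  case vanish =>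
    intro k hk hk'
    simp only [mem_Icc] at hk hk'
    unfold pairCoeff step
    split_ifs <;> omega
  refine congrArg _ (sum_congr rfl fun k hk => ?_)
  simp only [mem_Icc] at hk
  rw [eDer_wInt p (by omega), show (p : ℤ) + (q + m - k) = p + q + m - k by ring]

def ioc (p q k : ℤ) : ℤ := step (k - p) - step (k - q)

lemma sum_w_mul_eVal {p q : ℕ} (hpq : p < q) {m : ℕ} (hm : m ≠ 0) :
    ∑ a ∈ Icc p (q - 1), w (p + q - a) * eVal a m =
      tripleSum (p + q + m) (fun k a b => ioc p q k * pairCoeff (p + q - k) a b) := by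
  rw [tripleSum_mul_eq_sum_Icc (lo := p + 1) (hi := q) _ _ (by omega) (by omega) ?vanish]
  case vanish =>
    intro k hk hk'
    simp only [mem_Icc] at hk hk'
    unfold ioc step
    split_ifs <;> omega
  refine sum_nbij' (fun a => (p + q - a : ℤ)) (fun k => (p + q - k).toNat) ?_ ?_ ?_ ?_
    fun a ha => ?_
  any_goals intro k hk; simp only [mem_Icc] at hk ⊢; omega
  simp only [mem_Icc] at ha
  have hioc : ioc p q (p + q - a) = 1 := by
    unfold ioc step
    split_ifs <;> omega
  have hcast : (p + q - a : ℤ) = (p + q - a : ℕ) := by omega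
  rw [hioc, one_smul, show (p + q + m : ℤ) - (p + q - a) = a + m by ring,
    show (p + q : ℤ) - (p + q - a) = a by ring, hcast, wInt_natCast (by omega),
    eVal_eq_pairSum a hm]

lemma commutator_coeff_identity (p q m k a : ℤ) :
    let b := p + q + m - k - a
    let h x y := ioc p q y * pairCoeff p x (p + m - x)
    pairCoeff q k (q + m - k) * pairCoeff p a b + (h a k + h b k) =
      pairCoeff p k (p + m - k) * pairCoeff q a b + ioc p q k * pairCoeff (p + q - k) a b +
        (h k a + h k b) := by
  simp only [pairCoeff, ioc]
  ring_nf

lemma eDer_eVal_sub_eDer_eVal {p q : ℕ} (hpq : p < q) {m : ℕ} (hm : m ≠ 0) :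
    eDer p (eVal q m) - eDer q (eVal p m) =
      2 • ∑ a ∈ Icc p (q - 1), w (p + q - a) * eVal a m := by
  let S : ℤ := p + q + m
  let h (x y : ℤ) : ℤ := ioc p q y * pairCoeff p x (p + m - x)
  have key : tripleSum S (fun k a b => pairCoeff q k (q + m - k) * pairCoeff p a b) =
      tripleSum S ((fun k a b => pairCoeff p k (p + m - k) * pairCoeff q a b) +
        fun k a b => ioc p q k * pairCoeff (p + q - k) a b) := by
    refine add_right_cancel (b := tripleSum S fun x y z => h y x + h z x) ?_
    calc _ = tripleSum S ((fun k a b => pairCoeff q k (q + m - k) * pairCoeff p a b) +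
            fun x y z => h y x + h z x) := (tripleSum_add _ _ _).symm
      _ = tripleSum S (((fun k a b => pairCoeff p k (p + m - k) * pairCoeff q a b) +
            fun k a b => ioc p q k * pairCoeff (p + q - k) a b) + fun x y z => h x y + h x z) :=
          tripleSum_congr fun k a => commutator_coeff_identity p q m k a
      _ = _ := by rw [tripleSum_add, tripleSum_comm_two]
  rw [eDer_eVal p q hm, eDer_eVal q p hm, sum_w_mul_eVal hpq hm, sub_eq_iff_eq_add', ← smul_add,
    show (q + p + m : ℤ) = S by ring, ← tripleSum_add]
  exact congrArg _ key

end KroneckerCoHA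

open KroneckerCoHA

/-- For `0 ≤ p < q`:
`e_p ∘ e_q − e_q ∘ e_p = 2 · ∑_{a=p}^{q−1} f_{p+q−a} ∘ e_a`. -/
theorem comm_e_e_right (p q : ℕ) (hpq : p < q) :
    e p ∘ₗ e q - e q ∘ₗ e p = 2 • ∑ a ∈ Icc p (q - 1), f (p + q - a) ∘ₗ e a := by
  have bracket : ⁅eDer p, eDer q⁆ = (2 : ℕ) • ∑ a ∈ Icc p (q - 1), w (p + q - a) • eDer a := by
    refine derivation_ext fun i => ?_
    simpa [Derivation.commutator_apply, Derivation.sum_apply, eDer_X] using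
      eDer_eVal_sub_eDer_eVal hpq i.succ_ne_zero
  refine LinearMap.ext fun x => ?_
  simpa [Derivation.commutator_apply, Derivation.sum_apply, e_apply, f, mul_sum] using
    congr($bracket x)

end
end

section
/- Let 0 ≤ p < q be integers. Then ∑_{a=p}^{q−1} e_a(w_{p+q−a}) = 0 in B. -/
/-!
`B = ℚ[w_1, w_2, …]` realized as `MvPolynomial ℕ ℚ`, where the `i`-th variable
`X i` is `w_{i+1}` (so every variable is some `w_n` with `n ≥ 1`).
`f n` is multiplication by `w n`, and `e p` is the unique ℚ-linear derivation
with the prescribed values on the variables.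
-/

open MvPolynomial Finset

noncomputable section

/-! With `S_j = ∑_{k<j} w_k w_{p+q-k}`, both branches of `eVal` give
`e_a(w_{p+q-a}) = S_{p+q-a} - S_{a+1}`. The reflection `a ↦ p+q-1-a` of `[p, q)` exchanges
the two terms, so the sum vanishes. -/

lemma e_w_eq_eVal (p : ℕ) {m : ℕ} (hm : 1 ≤ m) : e p (w m) = eVal p m := by
  change mkDerivation ℚ (fun i : ℕ => eVal p (i + 1)) (X (m - 1)) = _
  rw [mkDerivation_X, Nat.sub_add_cancel hm]

def partialSum (n j : ℕ) : B := ∑ k ∈ range j, w k * w (n - k)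

lemma eVal_eq_partialSum_sub (p m : ℕ) :
    eVal p m = partialSum (p + m) m - partialSum (p + m) (p + 1) := by
  unfold eVal partialSum
  split_ifs with h
  · rw [← Ico_add_one_right_eq_Icc, Nat.sub_add_cancel (by omega), sum_Ico_eq_sub _ h]
  · rw [← Ico_add_one_right_eq_Icc, sum_Ico_eq_sub _ (by omega), neg_sub]

lemma sum_Ico_reflect_eq_sum_Ico_succ {M : Type*} [AddCommMonoid M] (g : ℕ → M) (p q : ℕ) :
    ∑ a ∈ Ico p q, g (p + q - a) = ∑ a ∈ Ico p q, g (a + 1) := by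
  rw [sum_Ico_reflect g p (n := p + q) (m := q) (by omega), sum_Ico_add']
  congr 2 <;> omega

/-- For `0 ≤ p < q`: `∑_{a=p}^{q−1} e_a(w_{p+q−a}) = 0` in `B`. -/
theorem telescoping_sum (p q : ℕ) (hpq : p < q) :
    ∑ a ∈ Icc p (q - 1), e a (w (p + q - a)) = 0 := by
  rw [← Ico_add_one_right_eq_Icc, Nat.sub_add_cancel (by omega)]
  calc ∑ a ∈ Ico p q, e a (w (p + q - a))
      = ∑ a ∈ Ico p q, (partialSum (p + q) (p + q - a) - partialSum (p + q) (a + 1)) := by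
        refine sum_congr rfl fun a ha => ?_
        obtain ⟨-, haq⟩ := mem_Ico.mp ha
        rw [e_w_eq_eVal a (by omega), eVal_eq_partialSum_sub, Nat.add_sub_cancel' (by omega)]
    _ = 0 := by
        rw [sum_sub_distrib, sum_Ico_reflect_eq_sum_Ico_succ (partialSum (p + q)), sub_self]

end
end

section
/- Let p > q ≥ 0 be integers. Then, as ℚ-linear endomorphisms of B, one has e_p ∘ f_{q+1} − f_{q+1} ∘ e_p = −∑_{k=q+1}^{p} f_k ∘ f_{p+q+1−k}. -/
/-!
`B = ℚ[w_1, w_2, …]` realized as `MvPolynomial ℕ ℚ`, where the `i`-th variable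
`X i` is `w_{i+1}` (so every variable is some `w_n` with `n ≥ 1`).
`f n` is multiplication by `w n`, and `e p` is the unique ℚ-linear derivation
with the prescribed values on the variables.
-/

open MvPolynomial Finset

noncomputable section

/-!
For any derivation `D` and element `a`, Leibniz' rule gives `[D, a·] = D(a)·`. Hence
`[e_p, f_{q+1}]` is multiplication by `e_p(w_{q+1})`, which for `q + 1 ≤ p` is
`-∑_{k=q+1}^{p} w_k w_{p+q+1-k}` by the defining formula.
-/

theorem Derivation.toLinearMap_comp_mulLeft_sub_mulLeft_comp {R A : Type*} [CommSemiring R]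
    [CommRing A] [Algebra R A] (D : Derivation R A A) (a : A) :
    (D : A →ₗ[R] A) ∘ₗ LinearMap.mulLeft R a - LinearMap.mulLeft R a ∘ₗ (D : A →ₗ[R] A) =
      LinearMap.mulLeft R (D a) := by
  refine LinearMap.ext fun x => ?_
  simp only [LinearMap.sub_apply, LinearMap.comp_apply, LinearMap.mulLeft_apply,
    Derivation.coeFn_coe, Derivation.leibniz, smul_eq_mul]
  ring

theorem LinearMap.mulLeft_sum {R A ι : Type*} [CommSemiring R] [Semiring A] [Algebra R A]
    (s : Finset ι) (a : ι → A) :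
    LinearMap.mulLeft R (∑ i ∈ s, a i) = ∑ i ∈ s, LinearMap.mulLeft R (a i) :=
  map_sum (LinearMap.mul R A) a s

theorem LinearMap.mulLeft_neg {R A : Type*} [CommSemiring R] [Ring A] [Algebra R A] (a : A) :
    LinearMap.mulLeft R (-a) = -LinearMap.mulLeft R a :=
  map_neg (LinearMap.mul R A) a

theorem e_comp_f_sub_f_comp_e (p n : ℕ) :
    e p ∘ₗ f n - f n ∘ₗ e p = LinearMap.mulLeft ℚ (e p (w n)) :=
  Derivation.toLinearMap_comp_mulLeft_sub_mulLeft_comp _ _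

theorem e_w_succ (p m : ℕ) : e p (w (m + 1)) = eVal p (m + 1) :=
  mkDerivation_X ℚ _ m

theorem eVal_of_le {p m : ℕ} (h : m ≤ p) : eVal p m = -∑ k ∈ Icc m p, w k * w (p + m - k) :=
  if_neg h.not_gt

theorem f_comp_f (k l : ℕ) : f k ∘ₗ f l = LinearMap.mulLeft ℚ (w k * w l) :=
  (LinearMap.mulLeft_mul ℚ B _ _).symm

/-- For `p > q ≥ 0`:
`e_p ∘ f_{q+1} − f_{q+1} ∘ e_p = −∑_{k=q+1}^{p} f_k ∘ f_{p+q+1−k}`. -/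
theorem comm_e_f_gt (p q : ℕ) (hpq : q < p) :
    e p ∘ₗ f (q + 1) - f (q + 1) ∘ₗ e p
      = - ∑ k ∈ Icc (q + 1) p, f k ∘ₗ f (p + q + 1 - k) := by
  rw [e_comp_f_sub_f_comp_e, e_w_succ, eVal_of_le hpq, LinearMap.mulLeft_neg,
    LinearMap.mulLeft_sum]
  simp only [f_comp_f, add_assoc]

end
end

section
/- The ℚ-linear endomorphism c of V ⊗_ℚ V defined below is an involution: c ∘ c = id on V ⊗_ℚ V. -/
/-!
`V` is the free ℚ-vector space with basis `ε_p` (`p ≥ 0`) and `φ_n` (`n ≥ 1`),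
realized as `(ℕ ⊕ ℕ) →₀ ℚ`, where `Sum.inl p ↔ ε_p` and `Sum.inr j ↔ φ_{j+1}`.
The operator `c` on `V ⊗[ℚ] V` is defined on the basis of the tensor product
by the coefficient formulas of Theorem 2 (Section 4.1) of the paper.
-/

open TensorProduct

noncomputable section

abbrev V : Type := (ℕ ⊕ ℕ) →₀ ℚ

/-- The basis vector `ε_p` (for `p ≥ 0`). -/
def ε (p : ℕ) : V := Finsupp.single (Sum.inl p) 1

/-- The basis vector `φ_n` (for `n ≥ 1`). -/
def φ (n : ℕ) : V := Finsupp.single (Sum.inr (n - 1)) 1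

/-- `δ(p,q,a) = 1` if `p ≤ a < q`, `= −1` if `q ≤ a < p`, `= 0` otherwise. -/
def δ (p q a : ℕ) : ℚ :=
  if p ≤ a ∧ a < q then 1 else if q ≤ a ∧ a < p then -1 else 0

/-- The value of `c` on the basis vectors of `V ⊗ V`:
`c(ε_p ⊗ ε_q) = ε_q ⊗ ε_p + ∑_a δ(p,q,a)·(ε_a ⊗ φ_{p+q−a} + φ_{p+q−a} ⊗ ε_a)`,
`c(ε_p ⊗ φ_{q+1}) = φ_{q+1} ⊗ ε_p + ∑_a δ(p,q,a)·φ_{a+1} ⊗ φ_{p+q−a}`,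
`c(φ_{p+1} ⊗ ε_q) = ε_q ⊗ φ_{p+1} + ∑_a δ(p,q,a)·φ_{a+1} ⊗ φ_{p+q−a}`,
`c(φ_m ⊗ φ_n) = φ_n ⊗ φ_m`.
(The sums over all `a ≥ 0` are finite, since `δ(p,q,a) = 0` unless
`min p q ≤ a < max p q`; the range `Finset.range (p+q+1)` contains
all such `a`.) -/
def cFun : (ℕ ⊕ ℕ) × (ℕ ⊕ ℕ) → V ⊗[ℚ] V
  | (Sum.inl p, Sum.inl q) =>
      ε q ⊗ₜ ε p + ∑ a ∈ Finset.range (p + q + 1),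
        δ p q a • (ε a ⊗ₜ φ (p + q - a) + φ (p + q - a) ⊗ₜ ε a)
  | (Sum.inl p, Sum.inr j) =>
      φ (j + 1) ⊗ₜ ε p + ∑ a ∈ Finset.range (p + j + 1),
        δ p j a • (φ (a + 1) ⊗ₜ φ (p + j - a))
  | (Sum.inr i, Sum.inl q) =>
      ε q ⊗ₜ φ (i + 1) + ∑ a ∈ Finset.range (i + q + 1),
        δ i q a • (φ (a + 1) ⊗ₜ φ (i + q - a))
  | (Sum.inr i, Sum.inr j) => φ (j + 1) ⊗ₜ φ (i + 1)

/-- The standard basis of `V`. -/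
def bV : Module.Basis (ℕ ⊕ ℕ) ℚ V := Finsupp.basisSingleOne

/-- The ℚ-linear operator `c` on `V ⊗[ℚ] V`. -/
def c : V ⊗[ℚ] V →ₗ[ℚ] V ⊗[ℚ] V := (bV.tensorProduct bV).constr ℚ cFun

/-!
On basis tensors `c` is the flip plus a correction term with one `ε` factor fewer, so
`c ∘ c = id` amounts to two cancellations. Applying `c` to a symmetric mixed tensor
`ε_a ⊗ φ_n + φ_n ⊗ ε_a` returns it, because the two correction sums carry the opposite
coefficients `δ(a,n-1,·) = -δ(n-1,a,·)`; this settles `ε ⊗ ε`. For `ε ⊗ φ`, flipping the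
correction `∑ δ(p,q,a) φ_{a+1} ⊗ φ_{p+q-a}` reproduces it, since `δ(p,q,·)` is invariant under
the reflection `a ↦ p + q - 1 - a`, and it then cancels against the correction of the flip.
-/

section Delta

variable {M : Type*} [AddCommGroup M] [Module ℚ M]

lemma δ_swap (p q a : ℕ) : δ q p a = -δ p q a := by
  unfold δ; split_ifs <;> norm_num; omega

lemma δ_add_self (p q : ℕ) : δ p q (p + q) = 0 := by
  unfold δ; split_ifs <;> first | rfl | omega

lemma δ_reflect {p q a : ℕ} (h : a < p + q) : δ p q (p + q - 1 - a) = δ p q a := by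
  unfold δ; split_ifs <;> first | rfl | omega

lemma sum_δ_swap_smul_add_sum_δ_smul (s : Finset ℕ) (p q : ℕ) (T : ℕ → M) :
    ∑ a ∈ s, δ q p a • T a + ∑ a ∈ s, δ p q a • T a = 0 := by
  rw [← Finset.sum_add_distrib]
  exact Finset.sum_eq_zero fun a _ => by rw [δ_swap, ← add_smul, neg_add_cancel, zero_smul]

lemma sum_δ_smul_reflect (p q : ℕ) (F : ℕ → ℕ → M) :
    ∑ a ∈ Finset.range (p + q + 1), δ p q a • F (p + q - a) (a + 1) =
      ∑ a ∈ Finset.range (p + q + 1), δ p q a • F (a + 1) (p + q - a) := by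
  simp only [Finset.sum_range_succ _ (p + q), δ_add_self, zero_smul, add_zero]
  rw [← Finset.sum_range_reflect]
  refine Finset.sum_congr rfl fun a ha => ?_
  have ha : a < p + q := Finset.mem_range.mp ha
  rw [δ_reflect ha, show p + q - (p + q - 1 - a) = a + 1 by omega,
    show p + q - 1 - a + 1 = p + q - a by omega]

end Delta

-- `φ 0 = φ 1` (truncated subtraction), so this holds for every `n`.
lemma φ_sub_one_add_one (n : ℕ) : φ (n - 1 + 1) = φ n := by
  simp only [φ, Nat.add_sub_cancel]

lemma c_single_tmul_single (i j : ℕ ⊕ ℕ) :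
    c (Finsupp.single i 1 ⊗ₜ Finsupp.single j 1) = cFun (i, j) := by
  rw [c, ← Module.Basis.constr_basis (bV.tensorProduct bV) ℚ cFun (i, j),
    Module.Basis.tensorProduct_apply]
  rfl

lemma c_ε_tmul_ε (p q : ℕ) :
    c (ε p ⊗ₜ ε q) = ε q ⊗ₜ ε p + ∑ a ∈ Finset.range (p + q + 1),
      δ p q a • (ε a ⊗ₜ φ (p + q - a) + φ (p + q - a) ⊗ₜ ε a) :=
  c_single_tmul_single (.inl p) (.inl q)

lemma c_ε_tmul_φ_succ (p j : ℕ) :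
    c (ε p ⊗ₜ φ (j + 1)) = φ (j + 1) ⊗ₜ ε p + ∑ a ∈ Finset.range (p + j + 1),
      δ p j a • (φ (a + 1) ⊗ₜ φ (p + j - a)) :=
  c_single_tmul_single (.inl p) (.inr j)

lemma c_φ_succ_tmul_ε (i q : ℕ) :
    c (φ (i + 1) ⊗ₜ ε q) = ε q ⊗ₜ φ (i + 1) + ∑ a ∈ Finset.range (i + q + 1),
      δ i q a • (φ (a + 1) ⊗ₜ φ (i + q - a)) :=
  c_single_tmul_single (.inr i) (.inl q)

lemma c_φ_tmul_φ (m n : ℕ) : c (φ m ⊗ₜ φ n) = φ n ⊗ₜ φ m := by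
  rw [← φ_sub_one_add_one m, ← φ_sub_one_add_one n]
  exact c_single_tmul_single (.inr (m - 1)) (.inr (n - 1))

lemma c_symm_ε_φ (a n : ℕ) :
    c (ε a ⊗ₜ φ n + φ n ⊗ₜ ε a) = ε a ⊗ₜ φ n + φ n ⊗ₜ ε a := by
  rw [← φ_sub_one_add_one n, map_add, c_ε_tmul_φ_succ, c_φ_succ_tmul_ε, Nat.add_comm (n - 1) a,
    add_add_add_comm, sum_δ_swap_smul_add_sum_δ_smul _ _ _
      fun b => φ (b + 1) ⊗ₜ φ (a + (n - 1) - b), add_zero, add_comm]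

lemma c_c_ε_tmul_ε (p q : ℕ) : c (c (ε p ⊗ₜ ε q)) = ε p ⊗ₜ ε q := by
  rw [c_ε_tmul_ε, map_add, map_sum, c_ε_tmul_ε q p]
  simp only [map_smul, c_symm_ε_φ, Nat.add_comm q p]
  rw [add_assoc, sum_δ_swap_smul_add_sum_δ_smul _ _ _
    fun a => ε a ⊗ₜ[ℚ] φ (p + q - a) + φ (p + q - a) ⊗ₜ[ℚ] ε a, add_zero]

lemma c_c_ε_tmul_φ_succ (p j : ℕ) : c (c (ε p ⊗ₜ φ (j + 1))) = ε p ⊗ₜ φ (j + 1) := by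
  simp only [c_ε_tmul_φ_succ, c_φ_succ_tmul_ε, map_add, map_sum, map_smul, c_φ_tmul_φ,
    Nat.add_comm j p]
  rw [sum_δ_smul_reflect p j (fun m n => φ m ⊗ₜ φ n), add_assoc,
    sum_δ_swap_smul_add_sum_δ_smul _ _ _ fun a => φ (a + 1) ⊗ₜ φ (p + j - a), add_zero]

lemma c_c_φ_succ_tmul_ε (i q : ℕ) : c (c (φ (i + 1) ⊗ₜ ε q)) = φ (i + 1) ⊗ₜ ε q := by
  simp only [c_φ_succ_tmul_ε, c_ε_tmul_φ_succ, map_add, map_sum, map_smul, c_φ_tmul_φ,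
    Nat.add_comm q i]
  rw [sum_δ_smul_reflect i q (fun m n => φ m ⊗ₜ φ n), add_assoc,
    sum_δ_swap_smul_add_sum_δ_smul _ _ _ fun a => φ (a + 1) ⊗ₜ φ (i + q - a), add_zero]

/-- The operator `c` is an involution: `c ∘ c = id`. -/
theorem c_involution : c ∘ₗ c = LinearMap.id := by
  refine (bV.tensorProduct bV).ext ?_
  rintro ⟨p | i, q | j⟩ <;> rw [Module.Basis.tensorProduct_apply, LinearMap.comp_apply]
  · exact c_c_ε_tmul_ε p q
  · exact c_c_ε_tmul_φ_succ p j
  · exact c_c_φ_succ_tmul_ε i q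
  · exact (congrArg c (c_φ_tmul_φ (i + 1) (j + 1))).trans (c_φ_tmul_φ _ _)

end
end

section
/- Let R be a (possibly noncommutative) ring and let (e_n)_{n≥0} and (f_n)_{n≥1} be sequences in R. In the formal power series ring R[[X,Y]] in two central variables, consider the product (∑_{i,j≥0} e_{i+j} X^i Y^j) · (∑_{k≥0} f_{k+1} Y^{k+1} − ∑_{k≥0} f_{k+1} X^{k+1}). Then for all integers 0 ≤ p < q, the coefficient of X^p Y^q in this product equals ∑_{a=p}^{q−1} e_a · f_{p+q−a}. -/
/-!
Formal power series in two central variables `X, Y` over a (possibly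
noncommutative) ring `R`, realized as `MvPowerSeries (Fin 2) R` with
`X` the variable of index `0` and `Y` the variable of index `1`.
A power series is given by its coefficient function `(Fin 2 →₀ ℕ) → R`.
-/

noncomputable section

/-- The series `∑_{i,j ≥ 0} e_{i+j} X^i Y^j`. -/
def seriesE {R : Type*} [Ring R] (e : ℕ → R) : MvPowerSeries (Fin 2) R :=
  fun d => e (d 0 + d 1)

/-- The series `∑_{k ≥ 0} f_{k+1} Y^{k+1} − ∑_{k ≥ 0} f_{k+1} X^{k+1}`. -/
def seriesF {R : Type*} [Ring R] (f : ℕ → R) : MvPowerSeries (Fin 2) R :=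
  fun d => (if d 0 = 0 ∧ 1 ≤ d 1 then f (d 1) else 0)
    - (if d 1 = 0 ∧ 1 ≤ d 0 then f (d 0) else 0)

/-!
The second factor is `G(Y) − G(X)` for `G(T) = ∑ₖ f_k Tᵏ`, and multiplying by a series in a single
variable `T` only shifts the coefficients of the other factor in `T`. Hence the coefficient of
`XᵖY^q` is `∑_{k ≤ q} e_{p+q−k} f_k − ∑_{k ≤ p} e_{p+q−k} f_k`, which leaves the terms `p < k ≤ q`.
-/

namespace MvPowerSeries

variable {σ R : Type*}

/-- The series `∑ₖ g k • X_i ^ k`. -/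
def ofVar [DecidableEq σ] [Zero R] (i : σ) (g : ℕ → R) : MvPowerSeries σ R :=
  fun m => if m = Finsupp.single i (m i) then g (m i) else 0

theorem coeff_mul_ofVar [Semiring R] [DecidableEq σ] (φ : MvPowerSeries σ R) (i : σ)
    (g : ℕ → R) (d : σ →₀ ℕ) :
    coeff d (φ * ofVar i g) =
      ∑ k ∈ Finset.range (d i + 1), coeff (d - Finsupp.single i k) φ * g k := by
  rw [coeff_mul]
  symm
  refine Finset.sum_of_injOn (fun k => (d - Finsupp.single i k, Finsupp.single i k)) ?_ ?_ ?_ ?_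
  · intro k _ l _ hkl
    simpa using Finsupp.single_injective i (congrArg Prod.snd hkl)
  · intro k hk
    have hle : Finsupp.single i k ≤ d := by
      simpa [Finsupp.single_le_iff, Nat.lt_succ_iff] using hk
    simp [tsub_add_cancel_of_le hle]
  · rintro ⟨a, b⟩ hab hnot
    rw [Finset.HasAntidiagonal.mem_antidiagonal] at hab
    have hb : b ≠ Finsupp.single i (b i) := by
      rintro hb
      refine hnot ⟨b i, ?_, ?_⟩
      · simp [← hab]
      · simp [← hab, ← hb]
    simp [coeff_apply, ofVar, hb]
  · intro k _
    simp [coeff_apply, ofVar]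

end MvPowerSeries

open MvPowerSeries

lemma Finsupp.fin_two_eq_single_iff {M : Type*} [Zero M] {m : Fin 2 →₀ M} {i j : Fin 2}
    (hij : i ≠ j) : m = Finsupp.single i (m i) ↔ m j = 0 := by
  fin_cases i <;> fin_cases j <;> simp_all [Finsupp.ext_iff, Fin.forall_fin_two]

-- The constant terms `f 0` of the two summands cancel.
theorem seriesF_eq_ofVar_sub_ofVar {R : Type*} [Ring R] (f : ℕ → R) :
    seriesF f = ofVar 1 f - ofVar 0 f := by
  ext m
  rw [map_sub]
  simp only [seriesF, ofVar, coeff_apply]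
  simp_rw [Finsupp.fin_two_eq_single_iff (i := 1) (j := 0) (by decide),
    Finsupp.fin_two_eq_single_iff (i := 0) (j := 1) (by decide)]
  by_cases h0 : m 0 = 0 <;> by_cases h1 : m 1 = 0 <;> simp [h0, h1, Nat.one_le_iff_ne_zero]

lemma coeff_tsub_single_seriesE {R : Type*} [Ring R] (e : ℕ → R) (m : Fin 2 →₀ ℕ) (i : Fin 2)
    {k : ℕ} (hk : k ≤ m i) :
    coeff (m - Finsupp.single i k) (seriesE e) = e (m 0 + m 1 - k) := by
  change e ((m - Finsupp.single i k) 0 + (m - Finsupp.single i k) 1) = _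
  fin_cases i <;> simp at hk ⊢ <;> congr 1 <;> omega

lemma Finset.sum_Ico_reflect_add {M : Type*} [AddCommMonoid M] (g : ℕ → ℕ → M) (p q : ℕ) :
    ∑ a ∈ Finset.Ico p q, g a (p + q - a) = ∑ k ∈ Finset.Ico (p + 1) (q + 1), g (p + q - k) k := by
  have hreflect := Finset.sum_Ico_reflect (fun k => g (p + q - k) k) p (n := p + q) (m := q)
    (by omega)
  rw [show p + q + 1 - q = p + 1 by omega, show p + q + 1 - p = q + 1 by omega] at hreflect
  rw [← hreflect]
  refine Finset.sum_congr rfl fun a ha => ?_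
  rw [Finset.mem_Ico] at ha
  rw [Nat.sub_sub_self (by omega)]

/-- For `0 ≤ p < q`, the coefficient of `X^p Y^q` in
`(∑_{i,j≥0} e_{i+j} X^i Y^j) · (∑_{k≥0} f_{k+1} Y^{k+1} − ∑_{k≥0} f_{k+1} X^{k+1})`
equals `∑_{a=p}^{q−1} e_a · f_{p+q−a}`. -/
theorem coeff_of_product {R : Type*} [Ring R] (e f : ℕ → R) (p q : ℕ) (hpq : p < q) :
    MvPowerSeries.coeff (R := R) (Finsupp.single (0 : Fin 2) p + Finsupp.single (1 : Fin 2) q)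
        (seriesE e * seriesF f)
      = ∑ a ∈ Finset.Ico p q, e a * f (p + q - a) := by
  set d : Fin 2 →₀ ℕ := Finsupp.single 0 p + Finsupp.single 1 q
  have hd0 : d 0 = p := by simp [d]
  have hd1 : d 1 = q := by simp [d]
  have hterm : ∀ i, ∀ k ∈ Finset.range (d i + 1),
      coeff (d - Finsupp.single i k) (seriesE e) * f k = e (p + q - k) * f k := by
    intro i k hk
    rw [coeff_tsub_single_seriesE e d i (Finset.mem_range_succ_iff.mp hk), hd0, hd1]
  rw [seriesF_eq_ofVar_sub_ofVar, mul_sub, map_sub, coeff_mul_ofVar, coeff_mul_ofVar,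
    Finset.sum_congr rfl (hterm 1), Finset.sum_congr rfl (hterm 0), hd0, hd1,
    ← Finset.sum_Ico_eq_sub _ (by omega), Finset.sum_Ico_reflect_add (fun a k => e a * f k)]

end
end

section
/- In K one has E_X * E_Y − E_Y * E_X = 2·(y_1+y_2−x_1−x_2)·(Y−X) / ((1−x_1X)(1−x_2X)(1−x_1Y)(1−x_2Y)), where E_X(x,y) = 1/(1−xX) and E_Y(x,y) = 1/(1−xY). -/
/-!
`K` is the field of rational functions over ℚ in the six variables
`x₁, x₂, y₁, y₂, X, Y`, realized as the fraction field of
`MvPolynomial (Fin 6) ℚ`.  `starMul` is the Kontsevich–Soibelman shuffle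
product of the Cohomological Hall algebra of the Kronecker quiver in
bidegree `(1,1) × (1,1)`, and `starMul'` the one in bidegree `(1,0) × (1,2)`
(evaluated on classes not depending on the `y`-variables of the second factor).
-/

open MvPolynomial

noncomputable section

abbrev P6 : Type := MvPolynomial (Fin 6) ℚ
abbrev K : Type := FractionRing P6

def x1 : K := algebraMap P6 K (X 0)
def x2 : K := algebraMap P6 K (X 1)
def y1 : K := algebraMap P6 K (X 2)
def y2 : K := algebraMap P6 K (X 3)
def Xv : K := algebraMap P6 K (X 4)
def Yv : K := algebraMap P6 K (X 5)

/-- The shuffle product in bidegree `(1,1) × (1,1)`: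
`f*g = (1/((x₂−x₁)(y₂−y₁))) · ( f(x₁,y₁)g(x₂,y₂)(y₂−x₁)² − f(x₁,y₂)g(x₂,y₁)(y₁−x₁)²`
`− f(x₂,y₁)g(x₁,y₂)(y₂−x₂)² + f(x₂,y₂)g(x₁,y₁)(y₁−x₂)² )`. -/
def starMul (f g : K → K → K) : K :=
  ((x2 - x1) * (y2 - y1))⁻¹ *
    (f x1 y1 * g x2 y2 * (y2 - x1) ^ 2 - f x1 y2 * g x2 y1 * (y1 - x1) ^ 2 -
      f x2 y1 * g x1 y2 * (y2 - x2) ^ 2 + f x2 y2 * g x1 y1 * (y1 - x2) ^ 2)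

/-- The shuffle product in bidegree `(1,0) × (1,2)`:
`f∗'g = (1/(x₂−x₁)) · ( f(x₁)g(x₂)(y₁−x₁)²(y₂−x₁)² − f(x₂)g(x₁)(y₁−x₂)²(y₂−x₂)² )`. -/
def starMul' (f g : K → K) : K :=
  (x2 - x1)⁻¹ *
    (f x1 * g x2 * (y1 - x1) ^ 2 * (y2 - x1) ^ 2 -
      f x2 * g x1 * (y1 - x2) ^ 2 * (y2 - x2) ^ 2)

/-- `E(X)(x,y) = 1/(1−xX)`. -/
def EX : K → K → K := fun x _ => (1 - x * Xv)⁻¹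
/-- `E(Y)(x,y) = 1/(1−xY)`. -/
def EY : K → K → K := fun x _ => (1 - x * Yv)⁻¹
/-- `F(X)(x,y) = (y−x)/(1−xX)`. -/
def FX : K → K → K := fun x y => (y - x) / (1 - x * Xv)
/-- `F(Y)(x,y) = (y−x)/(1−xY)`. -/
def FY : K → K → K := fun x y => (y - x) / (1 - x * Yv)
/-- `G(x,y) = (YE(Y)−XE(X))/(Y−X) = 1/((1−xX)(1−xY))`. -/
def G : K → K → K := fun x _ => ((1 - x * Xv) * (1 - x * Yv))⁻¹
/-- `H(x,y) = (YF(Y)−XF(X))/(Y−X) = (y−x)/((1−xX)(1−xY))`. -/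
def H : K → K → K := fun x y => (y - x) / ((1 - x * Xv) * (1 - x * Yv))
/-- `g₀(x) = 1/((1−xX)(1−xY))`. -/
def g0 : K → K := fun x => ((1 - x * Xv) * (1 - x * Yv))⁻¹

/-! For classes independent of `y`, the difference `(y₂ - x)² - (y₁ - x)²` factors through
`y₂ - y₁`, which cancels the second factor of the denominator of the shuffle product. The
commutator of two such classes is then an antisymmetrized product of their values at `x₁, x₂`
times `2(y₁ + y₂ - x₁ - x₂)`, and for `E(X), E(Y)` that antisymmetrization is divisible by
`x₂ - x₁`. -/

section FractionRing

variable {σ R : Type*} [CommRing R] [IsDomain R]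

lemma algebraMap_X_sub_X_ne_zero {i j : σ} (h : i ≠ j) :
    algebraMap (MvPolynomial σ R) (FractionRing (MvPolynomial σ R)) (X i) -
      algebraMap (MvPolynomial σ R) (FractionRing (MvPolynomial σ R)) (X j) ≠ 0 := by
  rw [← map_sub, map_ne_zero_iff _ (IsFractionRing.injective _ _)]
  exact sub_ne_zero.2 (X_injective.ne h)

lemma one_sub_algebraMap_X_mul_X_ne_zero (i j : σ) :
    1 - algebraMap (MvPolynomial σ R) (FractionRing (MvPolynomial σ R)) (X i) *
      algebraMap (MvPolynomial σ R) (FractionRing (MvPolynomial σ R)) (X j) ≠ 0 := by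
  rw [← map_mul, ← map_one (algebraMap (MvPolynomial σ R) _), ← map_sub,
    map_ne_zero_iff _ (IsFractionRing.injective _ _)]
  intro h
  simpa using congrArg constantCoeff h

end FractionRing

lemma starMul_of_indep_y (a b : K → K) :
    starMul (fun x _ => a x) (fun x _ => b x) =
      (x2 - x1)⁻¹ * (a x1 * b x2 * (y1 + y2 - 2 * x1) - a x2 * b x1 * (y1 + y2 - 2 * x2)) := by
  have hy : y2 - y1 ≠ 0 := algebraMap_X_sub_X_ne_zero (by decide)
  rw [starMul, mul_inv, mul_assoc]
  congr 1
  field_simp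
  ring

lemma starMul_sub_starMul_of_indep_y (a b : K → K) :
    starMul (fun x _ => a x) (fun x _ => b x) - starMul (fun x _ => b x) (fun x _ => a x) =
      (x2 - x1)⁻¹ * (a x1 * b x2 - a x2 * b x1) * (2 * (y1 + y2 - x1 - x2)) := by
  rw [starMul_of_indep_y, starMul_of_indep_y]
  ring

lemma inv_mul_inv_sub_inv_mul_inv_one_sub {F : Type*} [Field F] {u v s t : F}
    (hus : 1 - u * s ≠ 0) (hvs : 1 - v * s ≠ 0) (hut : 1 - u * t ≠ 0) (hvt : 1 - v * t ≠ 0) :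
    (1 - u * s)⁻¹ * (1 - v * t)⁻¹ - (1 - v * s)⁻¹ * (1 - u * t)⁻¹ =
      (v - u) * (t - s) / ((1 - u * s) * (1 - v * s) * (1 - u * t) * (1 - v * t)) := by
  rw [← mul_inv, ← mul_inv, inv_sub_inv (mul_ne_zero hus hvt) (mul_ne_zero hvs hut),
    div_eq_div_iff (by simp [*]) (by simp [*])]
  ring

/-- `[E(X),E(Y)]_* = 2(y₁+y₂−x₁−x₂)(Y−X)/((1−x₁X)(1−x₂X)(1−x₁Y)(1−x₂Y))`. -/
theorem stmt8 : starMul EX EY - starMul EY EX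
    = 2 * (y1 + y2 - x1 - x2) * (Yv - Xv) /
        ((1 - x1 * Xv) * (1 - x2 * Xv) * (1 - x1 * Yv) * (1 - x2 * Yv)) := by
  have hx : x2 - x1 ≠ 0 := algebraMap_X_sub_X_ne_zero (by decide)
  have h1X : 1 - x1 * Xv ≠ 0 := one_sub_algebraMap_X_mul_X_ne_zero 0 4
  have h2X : 1 - x2 * Xv ≠ 0 := one_sub_algebraMap_X_mul_X_ne_zero 1 4
  have h1Y : 1 - x1 * Yv ≠ 0 := one_sub_algebraMap_X_mul_X_ne_zero 0 5
  have h2Y : 1 - x2 * Yv ≠ 0 := one_sub_algebraMap_X_mul_X_ne_zero 1 5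
  refine (starMul_sub_starMul_of_indep_y (fun x => (1 - x * Xv)⁻¹)
    (fun x => (1 - x * Yv)⁻¹)).trans ?_
  rw [inv_mul_inv_sub_inv_mul_inv_one_sub h1X h2X h1Y h2Y]
  field_simp

end
end

section
/- In K one has E_X * F_Y − F_Y * E_X = (y_1+y_2−x_1−x_2)^2·(Y−X) / ((1−x_1X)(1−x_2X)(1−x_1Y)(1−x_2Y)), where E_X(x,y) = 1/(1−xX) and F_Y(x,y) = (y−x)/(1−xY). -/
/-!
`K` is the field of rational functions over ℚ in the six variables
`x₁, x₂, y₁, y₂, X, Y`, realized as the fraction field of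
`MvPolynomial (Fin 6) ℚ`.  `starMul` is the Kontsevich–Soibelman shuffle
product of the Cohomological Hall algebra of the Kronecker quiver in
bidegree `(1,1) × (1,1)`, and `starMul'` the one in bidegree `(1,0) × (1,2)`
(evaluated on classes not depending on the `y`-variables of the second factor).
-/

open MvPolynomial

noncomputable section

/-!
Since `E_X` does not depend on `y` and `F_Y` is `y − x` times a function of `x`, the eight kernel
terms of the commutator collapse: both `E(x₁)F(x₂)` and `E(x₂)F(x₁)` get the coefficient
`(y₂ − y₁)(y₁ + y₂ − x₁ − x₂)²`, leaving `(x₂ − x₁)⁻¹(y₁ + y₂ − x₁ − x₂)²` times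
`(1 − x₁X)⁻¹(1 − x₂Y)⁻¹ − (1 − x₂X)⁻¹(1 − x₁Y)⁻¹ = (x₂ − x₁)(Y − X) / ∏(1 − xᵢX)(1 − xᵢY)`.
-/

theorem MvPolynomial.algebraMap_ne_zero_of_eval_ne_zero {σ R L : Type*} [CommRing R] [CommRing L]
    [Algebra (MvPolynomial σ R) L] [IsFractionRing (MvPolynomial σ R) L] {p : MvPolynomial σ R}
    (v : σ → R) (h : eval v p ≠ 0) : algebraMap (MvPolynomial σ R) L p ≠ 0 :=
  (map_ne_zero_iff _ (IsFractionRing.injective _ L)).mpr fun hp => h (by rw [hp, map_zero])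

theorem algebraMap_X_sub_algebraMap_X_ne_zero {i j : Fin 6} (hij : i ≠ j) :
    algebraMap P6 K (X i) - algebraMap P6 K (X j) ≠ 0 :=
  sub_ne_zero.mpr fun h => hij (X_injective (IsFractionRing.injective P6 K h))

theorem one_sub_algebraMap_X_mul_algebraMap_X_ne_zero (i j : Fin 6) :
    1 - algebraMap P6 K (X i) * algebraMap P6 K (X j) ≠ 0 := by
  have h := algebraMap_ne_zero_of_eval_ne_zero (L := K) (p := (1 - X i * X j : P6)) 0 (by simp)
  rwa [map_sub, map_one, map_mul] at h

theorem inv_one_sub_mul_commutator {F : Type*} [Field F] {a b s t : F} (has : 1 - a * s ≠ 0)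
    (hbs : 1 - b * s ≠ 0) (hat : 1 - a * t ≠ 0) (hbt : 1 - b * t ≠ 0) :
    (1 - a * s)⁻¹ * (1 - b * t)⁻¹ - (1 - b * s)⁻¹ * (1 - a * t)⁻¹
      = (b - a) * (t - s) / ((1 - a * s) * (1 - b * s) * (1 - a * t) * (1 - b * t)) := by
  have hsb : 1 - s * b ≠ 0 := by rwa [mul_comm]
  have hta : 1 - t * a ≠ 0 := by rwa [mul_comm]
  field_simp
  ring

theorem starMul_commutator (e f : K → K) :
    starMul (fun x _ => e x) (fun x y => (y - x) * f x) -
        starMul (fun x y => (y - x) * f x) (fun x _ => e x)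
      = (x2 - x1)⁻¹ * (y1 + y2 - x1 - x2) ^ 2 * (e x1 * f x2 - e x2 * f x1) := by
  have hy : y2 - y1 ≠ 0 := algebraMap_X_sub_algebraMap_X_ne_zero (i := 3) (j := 2) (by decide)
  unfold starMul
  field_simp
  ring

/-- `[E(X),F(Y)]_* = (y₁+y₂−x₁−x₂)²(Y−X)/((1−x₁X)(1−x₂X)(1−x₁Y)(1−x₂Y))`. -/
theorem stmt11 : starMul EX FY - starMul FY EX
    = (y1 + y2 - x1 - x2) ^ 2 * (Yv - Xv) /
        ((1 - x1 * Xv) * (1 - x2 * Xv) * (1 - x1 * Yv) * (1 - x2 * Yv)) := by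
  have hEX : EX = fun x _ => (1 - x * Xv)⁻¹ := rfl
  have hFY : FY = fun x y => (y - x) * (1 - x * Yv)⁻¹ :=
    funext₂ fun _ _ => div_eq_mul_inv _ _
  have hx : x2 - x1 ≠ 0 := algebraMap_X_sub_algebraMap_X_ne_zero (i := 1) (j := 0) (by decide)
  rw [hEX, hFY, starMul_commutator, inv_one_sub_mul_commutator (a := x1) (b := x2) (s := Xv) (t := Yv)
    (one_sub_algebraMap_X_mul_algebraMap_X_ne_zero 0 4)
    (one_sub_algebraMap_X_mul_algebraMap_X_ne_zero 1 4)
    (one_sub_algebraMap_X_mul_algebraMap_X_ne_zero 0 5)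
    (one_sub_algebraMap_X_mul_algebraMap_X_ne_zero 1 5)]
  field_simp

end
end

section
/- In K one has H * H = (y_1+y_2−x_1−x_2)^2 / ((1−x_1X)(1−x_2X)(1−x_1Y)(1−x_2Y)), where H(x,y) = (y−x)/((1−xX)(1−xY)). -/
/-!
`K` is the field of rational functions over ℚ in the six variables
`x₁, x₂, y₁, y₂, X, Y`, realized as the fraction field of
`MvPolynomial (Fin 6) ℚ`.  `starMul` is the Kontsevich–Soibelman shuffle
product of the Cohomological Hall algebra of the Kronecker quiver in
bidegree `(1,1) × (1,1)`, and `starMul'` the one in bidegree `(1,0) × (1,2)`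
(evaluated on classes not depending on the `y`-variables of the second factor).
-/

open MvPolynomial

noncomputable section

/-!
Writing `H(x,y) = g₀(x)·(y−x)`, the factor `g₀(x₁)g₀(x₂)` is common to all four terms of the
shuffle product, so `H * H = g₀(x₁)g₀(x₂) · ((y−x) * (y−x))`, and the shuffle square of `y−x`
is `(y₁+y₂−x₁−x₂)²` by a polynomial identity.
-/

theorem algebraMap_X_injective : Function.Injective (fun i : Fin 6 => algebraMap P6 K (X i)) :=
  (IsFractionRing.injective P6 K).comp X_injective

theorem x2_sub_x1_ne_zero : x2 - x1 ≠ 0 :=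
  sub_ne_zero.mpr (algebraMap_X_injective.ne (by decide))

theorem y2_sub_y1_ne_zero : y2 - y1 ≠ 0 :=
  sub_ne_zero.mpr (algebraMap_X_injective.ne (by decide))

theorem starMul_mul_left (φ : K → K) (f g : K → K → K) :
    starMul (fun x y => φ x * f x y) (fun x y => φ x * g x y) = φ x1 * φ x2 * starMul f g := by
  simp only [starMul]
  ring

theorem starMul_sub_self :
    starMul (fun x y => y - x) (fun x y => y - x) = (y1 + y2 - x1 - x2) ^ 2 := by
  rw [starMul, inv_mul_eq_iff_eq_mul₀ (mul_ne_zero x2_sub_x1_ne_zero y2_sub_y1_ne_zero)]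
  ring

theorem H_eq_g0_mul : H = fun x y => g0 x * (y - x) := by
  funext x y
  rw [H, g0, div_eq_inv_mul]

/-- `H * H = (y₁+y₂−x₁−x₂)²/((1−x₁X)(1−x₂X)(1−x₁Y)(1−x₂Y))`. -/
theorem stmt12 : starMul H H
    = (y1 + y2 - x1 - x2) ^ 2 /
        ((1 - x1 * Xv) * (1 - x2 * Xv) * (1 - x1 * Yv) * (1 - x2 * Yv)) := by
  rw [H_eq_g0_mul, starMul_mul_left, starMul_sub_self]
  simp only [g0, div_eq_mul_inv, mul_inv]
  ring

end
end

section
/- Let d', d'' ≥ 1 and d = d' + d''. For any polynomials f ∈ ℚ[t_1,…,t_{d'}] and g ∈ ℚ[t_1,…,t_{d''}], define in the fraction field of ℚ[x_1,…,x_d] the element S_{d',d''}(f,g) := ∑_{σ ∈ S_d} f(x_{σ(1)},…,x_{σ(d')})·g(x_{σ(d'+1)},…,x_{σ(d)})·∏_{r=1}^{d'} ∏_{s=1}^{d''} (x_{σ(d'+s)} − x_{σ(r)})^{−1}. Then S_{d',d''}(f,g) = (−1)^{d'·d''} · S_{d'',d'}(g,f). -/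
/-!
For `d = d' + d''`, `Ssum d d' d'' h f g` is the element
`∑_{σ ∈ S_d} f(x_{σ(1)},…,x_{σ(d')}) g(x_{σ(d'+1)},…,x_{σ(d)})
  ∏_{r=1}^{d'} ∏_{s=1}^{d''} (x_{σ(d'+s)} − x_{σ(r)})⁻¹`
of the fraction field of `ℚ[x_1,…,x_d]`, which (up to the factor `d'!·d''!`)
is the Kontsevich–Soibelman shuffle product of `H(A_1)`.
-/

open MvPolynomial

noncomputable section

/-- The field of rational functions `ℚ(x_1,…,x_d)`. -/
abbrev KK (d : ℕ) : Type := FractionRing (MvPolynomial (Fin d) ℚ)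

/-- The variable `x_i` viewed in `ℚ(x_1,…,x_d)`. -/
def xv (d : ℕ) (i : Fin d) : KK d :=
  algebraMap (MvPolynomial (Fin d) ℚ) (KK d) (X i)

/-- `Ssum d a b h f g = ∑_{σ ∈ S_d} f(x_{σ(1)},…,x_{σ(a)})·g(x_{σ(a+1)},…,x_{σ(a+b)})·
∏_{r=1}^{a} ∏_{s=1}^{b} (x_{σ(a+s)} − x_{σ(r)})⁻¹` in `ℚ(x_1,…,x_d)`,
where `h : a + b = d`. -/
def Ssum (d a b : ℕ) (h : a + b = d) (f : MvPolynomial (Fin a) ℚ)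
    (g : MvPolynomial (Fin b) ℚ) : KK d :=
  ∑ σ : Equiv.Perm (Fin d),
    aeval (fun r : Fin a => xv d (σ (Fin.cast h (Fin.castAdd b r)))) f *
    aeval (fun s : Fin b => xv d (σ (Fin.cast h (Fin.natAdd a s)))) g *
    ∏ r : Fin a, ∏ s : Fin b,
      (xv d (σ (Fin.cast h (Fin.natAdd a s))) - xv d (σ (Fin.cast h (Fin.castAdd b r))))⁻¹

/-!
Precomposing `σ` with the permutation that exchanges the first `d'` and the last `d''` positions
turns each term of `S_{d'',d'}(g,f)` into the corresponding term of `S_{d',d''}(f,g)`, except that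
each of the `d'·d''` factors `(x_{σ(d'+s)} − x_{σ(r)})⁻¹` appears with its two entries exchanged,
i.e. with a sign `−1`.
-/

theorem prod_prod_inv_sub_comm {K ι κ : Type*} [Field K] [Fintype ι] [Fintype κ]
    (x : κ → K) (y : ι → K) :
    ∏ i, ∏ j, (x j - y i)⁻¹ =
      (-1) ^ (Fintype.card ι * Fintype.card κ) * ∏ j, ∏ i, (y i - x j)⁻¹ := by
  have hswap : ∀ i j, (x j - y i)⁻¹ = -1 * (y i - x j)⁻¹ := fun i j => by
    rw [← neg_sub, inv_neg, neg_one_mul]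
  rw [Finset.prod_comm]
  simp only [hswap, Finset.prod_mul_distrib, Finset.prod_const, Finset.card_univ, ← pow_mul]

section BlockSwap

variable {a b d : ℕ}

def finBlockSwap (h' : b + a = d) (h : a + b = d) : Equiv.Perm (Fin d) :=
  (finCongr h').symm.trans (finAddFlip.trans (finCongr h))

@[simp]
theorem finBlockSwap_cast_castAdd (h' : b + a = d) (h : a + b = d) (r : Fin b) :
    finBlockSwap h' h (Fin.cast h' (Fin.castAdd a r)) = Fin.cast h (Fin.natAdd a r) := by
  simp [finBlockSwap]

@[simp]
theorem finBlockSwap_cast_natAdd (h' : b + a = d) (h : a + b = d) (s : Fin a) :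
    finBlockSwap h' h (Fin.cast h' (Fin.natAdd b s)) = Fin.cast h (Fin.castAdd b s) := by
  simp [finBlockSwap]

end BlockSwap

/-- Anti-commutativity of the shuffle product of `H(A_1)`:
`S_{d',d''}(f,g) = (−1)^{d'·d''} · S_{d'',d'}(g,f)`. -/
theorem Ssum_anticomm (d a b : ℕ) (h : a + b = d)
    (f : MvPolynomial (Fin a) ℚ) (g : MvPolynomial (Fin b) ℚ) :
    Ssum d a b h f g = (-1 : KK d) ^ (a * b) * Ssum d b a (by omega) g f := by
  have h' : b + a = d := by omega
  rw [Ssum, Ssum, Finset.mul_sum]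
  refine Fintype.sum_equiv (Equiv.mulRight (finBlockSwap h' h)) _ _ fun τ => ?_
  simp only [Equiv.coe_mulRight, Equiv.Perm.mul_apply, finBlockSwap_cast_castAdd,
    finBlockSwap_cast_natAdd]
  rw [prod_prod_inv_sub_comm, Fintype.card_fin, Fintype.card_fin]
  ring

end
end
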